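/- The image of the group generated by the matrices (0,1;−1,−1) and (0,1;t,0) in PGL₂(𝔽_p(t)) contains a nonabelian free subgroup; in particular the subgroup generated by the images of these two matrices is infinite. -/

import Mathlib

/-!
Ping-pong on `ℙ¹(𝔽_p(t))` for the `t`-adic valuation `v`. Write `X, Y` for the two matrices;
the subgroup contains the images of `A = XY = (t, 0; -t, -1)` and
`B = X A³ X = (1, 1 - t + t² - t³; -1, -1 + t - t²)`. In the affine coordinate `z = x / y` on
`ℙ¹`, `A` maps `{v z ≤ 1}` into `{v z < 1}` and `A⁻¹` maps `{v z ≥ 1}` into `{v z > 1}`, while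
`B` and `B⁻¹` do the same with the discs `v (z + 1) < v t` and `v (z + 1 - t) < v t`. These four
sets are pairwise disjoint and nonempty, so by the ping-pong lemma `A` and `B` generate a free
group. The argument works verbatim for any valuation `v` on a field and any `t` with
`0 < v t < 1`.
-/

open Matrix

/-- `PGL₂` of a field: the quotient of `GL₂` by its center. -/
abbrev PGL2 (K : Type*) [Field K] :=
  GL (Fin 2) K ⧸ Subgroup.center (GL (Fin 2) K)

/-- The matrix `(0,1;−1,−1)` as an element of `GL₂(𝔽_p(t))`. -/
noncomputable def Xmat (p : ℕ) [Fact p.Prime] : GL (Fin 2) (RatFunc (ZMod p)) :=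
  Matrix.nonsingInvUnit !![0, 1; -1, -1] (by
    simp [Matrix.det_fin_two_of])

/-- The matrix `(0,1;t,0)` as an element of `GL₂(𝔽_p(t))`. -/
noncomputable def Ymat (p : ℕ) [Fact p.Prime] : GL (Fin 2) (RatFunc (ZMod p)) :=
  Matrix.nonsingInvUnit !![0, 1; RatFunc.X, 0] (by
    simp [Matrix.det_fin_two_of, RatFunc.X_ne_zero])

open Projectivization
open scoped MatrixGroups LinearAlgebra.Projectivization Pointwise

namespace Valuation

variable {K Γ₀ : Type*} [Field K] [LinearOrderedCommGroupWithZero Γ₀] {v : Valuation K Γ₀}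
  {t x y : K}

lemma map_mul_lt_of_lt_one (ht : v t < 1) (hx : x ≠ 0) : v (t * x) < v x := by
  rw [map_mul]
  exact mul_lt_of_lt_one_left (zero_lt_iff.2 (v.ne_zero_iff.2 hx)) ht

lemma map_mul_le_map_mul (t : K) (h : v x ≤ v y) : v (t * x) ≤ v (t * y) := by
  simpa only [map_mul] using mul_le_mul_right h (v t)

lemma le_map_add_of_ne (h : v x ≠ v y) : v y ≤ v (x + y) :=
  (v.map_add_of_distinct_val h).symm ▸ le_max_right _ _

lemma mul_le_map_add_mul {s : K} (ht : v t ≤ 1) (hs : v s = 1) (h : v x ≠ v y) :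
    v t * v y ≤ v (x + s * y) :=
  calc v t * v y ≤ v y := mul_le_of_le_one_left zero_le ht
    _ = v (s * y) := by rw [map_mul, hs, one_mul]
    _ ≤ v (x + s * y) := le_map_add_of_ne (by rwa [map_mul, hs, one_mul])

end Valuation

-- `PGL(Fin 2, K)` unfolds to the same quotient as `PGL2 K`.
instance PGL2.instMulActionProjectivization (K : Type*) [Field K] :
    MulAction (PGL2 K) (ℙ K (Fin 2 → K)) :=
  inferInstanceAs (MulAction PGL(Fin 2, K) (ℙ K (Fin 2 → K)))

section Sector

variable {K Γ₀ : Type*} [Field K] [LinearOrderedCommGroupWithZero Γ₀]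

/-- The condition is invariant under scaling `w`, so testing it on `P.rep` loses nothing
(`mk_mem_sector_iff`). -/
def sector (v : Valuation K Γ₀) (a b : Fin 2 → K) (c : Γ₀) : Set (ℙ K (Fin 2 → K)) :=
  {P | v (a ⬝ᵥ P.rep) < c * v (b ⬝ᵥ P.rep)}

variable {v : Valuation K Γ₀} {a b a' b' : Fin 2 → K} {c c' : Γ₀}

lemma sector_cond_smul_iff {s : K} (hs : s ≠ 0) (w : Fin 2 → K) :
    v (a ⬝ᵥ (s • w)) < c * v (b ⬝ᵥ (s • w)) ↔ v (a ⬝ᵥ w) < c * v (b ⬝ᵥ w) := by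
  simp only [dotProduct_smul, smul_eq_mul, map_mul, mul_left_comm c]
  exact mul_lt_mul_iff_of_pos_left (zero_lt_iff.2 (v.ne_zero_iff.2 hs))

lemma mk_mem_sector_iff {w : Fin 2 → K} (hw : w ≠ 0) :
    mk K w hw ∈ sector v a b c ↔ v (a ⬝ᵥ w) < c * v (b ⬝ᵥ w) := by
  obtain ⟨s, hs⟩ := exists_smul_eq_mk_rep K w hw
  rw [sector, Set.mem_ofPred_eq, ← hs, Units.smul_def]
  exact sector_cond_smul_iff s.ne_zero w

lemma disjoint_sector
    (h : ∀ w : Fin 2 → K, w ≠ 0 → v (a ⬝ᵥ w) < c * v (b ⬝ᵥ w) →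
      ¬ v (a' ⬝ᵥ w) < c' * v (b' ⬝ᵥ w)) :
    Disjoint (sector v a b c) (sector v a' b' c') :=
  Set.disjoint_left.2 fun P => h P.rep P.rep_nonzero

lemma smul_compl_sector_subset (g : GL (Fin 2) K)
    (h : ∀ w : Fin 2 → K, w ≠ 0 → ¬ v (a ⬝ᵥ w) < c * v (b ⬝ᵥ w) →
      v (a' ⬝ᵥ (↑g *ᵥ w)) < c' * v (b' ⬝ᵥ (↑g *ᵥ w))) :
    (QuotientGroup.mk g : PGL2 K) • (sector v a b c)ᶜ ⊆ sector v a' b' c' := by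
  rintro _ ⟨P, hP, rfl⟩
  induction P using Projectivization.ind with
  | h w hw =>
    rw [Set.mem_compl_iff, mk_mem_sector_iff] at hP
    exact (mk_mem_sector_iff _).2 (h w hw hP)

lemma inv_smul_compl_sector_subset (g : GL (Fin 2) K)
    (h : ∀ w : Fin 2 → K, w ≠ 0 → ¬ v (a ⬝ᵥ w) < c * v (b ⬝ᵥ w) →
      v (a' ⬝ᵥ (adjugate ↑g *ᵥ w)) < c' * v (b' ⬝ᵥ (adjugate ↑g *ᵥ w))) :
    (QuotientGroup.mk g : PGL2 K)⁻¹ • (sector v a b c)ᶜ ⊆ sector v a' b' c' := by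
  rw [← QuotientGroup.mk_inv]
  refine smul_compl_sector_subset _ fun w hw hP => ?_
  rw [coe_units_inv, inv_def, smul_mulVec, sector_cond_smul_iff (by simpa using g.det_ne_zero)]
  exact h w hw hP

end Sector

namespace PingPong

variable {K Γ₀ : Type*} [Field K] [LinearOrderedCommGroupWithZero Γ₀] {v : Valuation K Γ₀}
  {t : K}

lemma A_smul_subset (ht : v t < 1) {A : GL (Fin 2) K}
    (hA : (A : Matrix (Fin 2) (Fin 2) K) = !![t, 0; -t, -1]) :
    (QuotientGroup.mk A : PGL2 K) • (sector v ![0, 1] ![1, 0] 1)ᶜ ⊆ sector v ![1, 0] ![0, 1] 1 :=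
  smul_compl_sector_subset A fun w hw hP => by
    simp only [hA, dotProduct, Fin.sum_univ_two, cons_val_zero, cons_val_one, cons_val_fin_one,
      cons_mulVec, empty_mulVec, zero_mul, one_mul, zero_add, add_zero, neg_mul, not_lt] at hP ⊢
    set x := w 0
    set y := w 1
    have hy : y ≠ 0 := fun hy =>
      hw (funext (Fin.forall_fin_two.2 ⟨by simpa [hy] using hP, hy⟩))
    have hlt : v (t * x) < v y :=
      (Valuation.map_mul_le_map_mul t hP).trans_lt (Valuation.map_mul_lt_of_lt_one ht hy)
    rwa [← neg_add, Valuation.map_neg, Valuation.map_add_eq_of_lt_right _ hlt]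

lemma inv_A_smul_subset (ht : v t < 1) {A : GL (Fin 2) K}
    (hA : (A : Matrix (Fin 2) (Fin 2) K) = !![t, 0; -t, -1]) :
    (QuotientGroup.mk A : PGL2 K)⁻¹ • (sector v ![1, 0] ![0, 1] 1)ᶜ ⊆ sector v ![0, 1] ![1, 0] 1 :=
  inv_smul_compl_sector_subset A fun w hw hP => by
    simp only [hA, adjugate_fin_two_of, dotProduct, Fin.sum_univ_two, cons_val_zero, cons_val_one,
      cons_val_fin_one, cons_mulVec, empty_mulVec, zero_mul, one_mul, zero_add, add_zero, neg_zero,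
      neg_neg, neg_mul, Valuation.map_neg, not_lt] at hP ⊢
    set x := w 0
    set y := w 1
    have hx : x ≠ 0 := fun hx =>
      hw (funext (Fin.forall_fin_two.2 ⟨hx, by simpa [hx] using hP⟩))
    rw [← mul_add]
    calc v (t * (x + y)) ≤ v (t * x) := Valuation.map_mul_le_map_mul t (v.map_add_le le_rfl hP)
      _ < v x := Valuation.map_mul_lt_of_lt_one ht hx

lemma B_smul_subset (ht0 : t ≠ 0) (ht : v t < 1) {B : GL (Fin 2) K}
    (hB : (B : Matrix (Fin 2) (Fin 2) K) = !![1, 1 - t + t ^ 2 - t ^ 3; -1, -1 + t - t ^ 2]) :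
    (QuotientGroup.mk B : PGL2 K) • (sector v ![1, 1 - t] ![0, 1] (v t))ᶜ ⊆
      sector v ![1, 1] ![0, 1] (v t) :=
  smul_compl_sector_subset B fun w hw hP => by
    simp only [hB, dotProduct, Fin.sum_univ_two, cons_val_zero, cons_val_one, cons_val_fin_one,
      cons_mulVec, empty_mulVec, zero_mul, one_mul, zero_add, neg_mul, not_lt] at hP ⊢
    set x := w 0
    set y := w 1
    set u := x + (1 - t) * y with hu_def
    have hu : u ≠ 0 := fun hu => by
      have hy : y = 0 := by simpa [hu, ht0] using hP
      exact hw (funext (Fin.forall_fin_two.2 ⟨by simpa [hu_def, hy] using hu, hy⟩))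
    have hlt : v (t ^ 2 * y) < v u :=
      calc v (t ^ 2 * y) = v (t * (t * y)) := by ring_nf
        _ ≤ v (t * u) := Valuation.map_mul_le_map_mul t (by rwa [map_mul])
        _ < v u := Valuation.map_mul_lt_of_lt_one ht hu
    rw [show x + (1 - t + t ^ 2 - t ^ 3) * y + (-x + (-1 + t - t ^ 2) * y) = -(t * (t ^ 2 * y))
        by ring,
      show -x + (-1 + t - t ^ 2) * y = -(u + t ^ 2 * y) by ring, Valuation.map_neg,
      Valuation.map_neg, Valuation.map_add_eq_of_lt_left _ hlt, map_mul]
    exact mul_lt_mul_of_pos_left hlt (zero_lt_iff.2 (v.ne_zero_iff.2 ht0))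

lemma inv_B_smul_subset (ht0 : t ≠ 0) (ht : v t < 1) {B : GL (Fin 2) K}
    (hB : (B : Matrix (Fin 2) (Fin 2) K) = !![1, 1 - t + t ^ 2 - t ^ 3; -1, -1 + t - t ^ 2]) :
    (QuotientGroup.mk B : PGL2 K)⁻¹ • (sector v ![1, 1] ![0, 1] (v t))ᶜ ⊆
      sector v ![1, 1 - t] ![0, 1] (v t) :=
  inv_smul_compl_sector_subset B fun w hw hP => by
    simp only [hB, adjugate_fin_two_of, dotProduct, Fin.sum_univ_two, cons_val_zero, cons_val_one,
      cons_val_fin_one, cons_mulVec, empty_mulVec, zero_mul, one_mul, zero_add, neg_sub, neg_neg,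
      not_lt] at hP ⊢
    set x := w 0
    set y := w 1
    set s := x + y with hs_def
    have hs : s ≠ 0 := fun hs => by
      have hy : y = 0 := by simpa [hs, ht0] using hP
      exact hw (funext (Fin.forall_fin_two.2 ⟨by simpa [hs_def, hy] using hs, hy⟩))
    have h1 : v (t * (t * s)) < v (t * s) := Valuation.map_mul_lt_of_lt_one ht (mul_ne_zero ht0 hs)
    have h2 : v (t * (t * (t * y))) ≤ v (t * (t * s)) :=
      Valuation.map_mul_le_map_mul t (Valuation.map_mul_le_map_mul t (by rwa [map_mul]))
    rw [show (-1 + t - t ^ 2) * x + (t ^ 3 - (1 - t + t ^ 2)) * y + (1 - t) * s =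
      t * (t * (t * y)) - t * (t * s) by ring, ← map_mul]
    exact (v.map_sub _ _).trans_lt (max_lt (h2.trans_lt h1) h1)

lemma disjoint_A_A' : Disjoint (sector v ![1, 0] ![0, 1] 1) (sector v ![0, 1] ![1, 0] 1) :=
  disjoint_sector fun w _ h => by
    simp only [dotProduct, Fin.sum_univ_two, cons_val_zero, cons_val_one, cons_val_fin_one,
      zero_mul, one_mul, zero_add, add_zero, not_lt] at h ⊢
    exact h.le

lemma disjoint_A_B (ht : v t < 1) {s : K} (hs : v s = 1) :
    Disjoint (sector v ![1, 0] ![0, 1] 1) (sector v ![1, s] ![0, 1] (v t)) :=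
  disjoint_sector fun w _ h => by
    simp only [dotProduct, Fin.sum_univ_two, cons_val_zero, cons_val_one, cons_val_fin_one,
      zero_mul, one_mul, zero_add, add_zero, not_lt] at h ⊢
    exact Valuation.mul_le_map_add_mul ht.le hs h.ne

lemma disjoint_A'_B (ht : v t < 1) {s : K} (hs : v s = 1) :
    Disjoint (sector v ![0, 1] ![1, 0] 1) (sector v ![1, s] ![0, 1] (v t)) :=
  disjoint_sector fun w _ h => by
    simp only [dotProduct, Fin.sum_univ_two, cons_val_zero, cons_val_one, cons_val_fin_one,
      zero_mul, one_mul, zero_add, add_zero, not_lt] at h ⊢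
    exact Valuation.mul_le_map_add_mul ht.le hs h.ne'

lemma disjoint_B_B' :
    Disjoint (sector v ![1, 1] ![0, 1] (v t)) (sector v ![1, 1 - t] ![0, 1] (v t)) :=
  disjoint_sector fun w _ h => by
    simp only [dotProduct, Fin.sum_univ_two, cons_val_zero, cons_val_one, cons_val_fin_one,
      zero_mul, one_mul, zero_add] at h ⊢
    intro h'
    have hty := (v.map_sub _ _).trans_lt (max_lt h h')
    rw [show w 0 + w 1 - (w 0 + (1 - t) * w 1) = t * w 1 by ring, map_mul] at hty
    exact lt_irrefl _ hty

lemma nonempty_A : (sector v ![1, 0] ![0, 1] 1).Nonempty :=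
  ⟨mk K ![0, 1] (by simp), (mk_mem_sector_iff _).2 (by simp [dotProduct, Fin.sum_univ_two])⟩

lemma nonempty_B (ht0 : t ≠ 0) : (sector v ![1, 1] ![0, 1] (v t)).Nonempty :=
  ⟨mk K ![-1, 1] (by simp), (mk_mem_sector_iff _).2 (by
    simpa [dotProduct, Fin.sum_univ_two] using zero_lt_iff.2 (v.ne_zero_iff.2 ht0))⟩

end PingPong

-- `K : Type` because `FreeGroup.injective_lift_of_ping_pong` puts the group in the universe of the
-- index type `Bool`.
open PingPong in
theorem PGL2.injective_freeGroupLift_of_valuation {K : Type} {Γ₀ : Type*} [Field K]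
    [LinearOrderedCommGroupWithZero Γ₀] (v : Valuation K Γ₀) {t : K} (ht0 : t ≠ 0)
    (ht : v t < 1) {A B : GL (Fin 2) K}
    (hA : (A : Matrix (Fin 2) (Fin 2) K) = !![t, 0; -t, -1])
    (hB : (B : Matrix (Fin 2) (Fin 2) K) = !![1, 1 - t + t ^ 2 - t ^ 3; -1, -1 + t - t ^ 2]) :
    Function.Injective
      (FreeGroup.lift fun i => cond i (QuotientGroup.mk A : PGL2 K) (QuotientGroup.mk B)) := by
  have hAB' : Disjoint (sector v ![1, 0] ![0, 1] 1) (sector v ![1, 1 - t] ![0, 1] (v t)) :=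
    disjoint_A_B ht (Valuation.map_one_sub_of_lt _ ht)
  have hA'B : Disjoint (sector v ![0, 1] ![1, 0] 1) (sector v ![1, 1] ![0, 1] (v t)) :=
    disjoint_A'_B ht v.map_one
  refine FreeGroup.injective_lift_of_ping_pong _
    (fun i => cond i (sector v ![1, 0] ![0, 1] 1) (sector v ![1, 1] ![0, 1] (v t)))
    (fun i => cond i (sector v ![0, 1] ![1, 0] 1) (sector v ![1, 1 - t] ![0, 1] (v t)))
    (Bool.forall_bool.2 ⟨nonempty_B ht0, nonempty_A⟩)
    (pairwise_disjoint_on_bool.2 (disjoint_A_B ht v.map_one))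
    (pairwise_disjoint_on_bool.2 (disjoint_A'_B ht (Valuation.map_one_sub_of_lt _ ht)))
    (Bool.forall_bool.2 ⟨Bool.forall_bool.2 ⟨disjoint_B_B', hA'B.symm⟩,
      Bool.forall_bool.2 ⟨hAB', disjoint_A_A'⟩⟩)
    (Bool.forall_bool.2 ⟨B_smul_subset ht0 ht hB, A_smul_subset ht hA⟩)
    (Bool.forall_bool.2 ⟨inv_B_smul_subset ht0 ht hB, inv_A_smul_subset ht hA⟩)

section RationalFunctions

lemma RatFunc.valuation_X_lt_one (F : Type*) [Field F] :
    (Polynomial.idealX F).valuation (RatFunc F) RatFunc.X < 1 := by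
  rw [Polynomial.valuation_X_eq_neg_one, ← WithZero.exp_zero, WithZero.exp_lt_exp]
  norm_num

variable (p : ℕ) [Fact p.Prime]

lemma coe_Xmat : (Xmat p : Matrix (Fin 2) (Fin 2) (RatFunc (ZMod p))) = !![0, 1; -1, -1] := rfl

lemma coe_Ymat : (Ymat p : Matrix (Fin 2) (Fin 2) (RatFunc (ZMod p))) = !![0, 1; RatFunc.X, 0] :=
  rfl

lemma coe_Xmat_mul_Ymat :
    ((Xmat p * Ymat p : GL (Fin 2) (RatFunc (ZMod p))) :
        Matrix (Fin 2) (Fin 2) (RatFunc (ZMod p))) =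
      !![RatFunc.X, 0; -RatFunc.X, -1] := by
  simp [coe_Xmat, coe_Ymat]

lemma coe_Xmat_mul_pow_mul_Xmat :
    ((Xmat p * (Xmat p * Ymat p) ^ 3 * Xmat p : GL (Fin 2) (RatFunc (ZMod p))) :
        Matrix (Fin 2) (Fin 2) (RatFunc (ZMod p))) =
      !![1, 1 - RatFunc.X + RatFunc.X ^ 2 - RatFunc.X ^ 3;
        -1, -1 + RatFunc.X - RatFunc.X ^ 2] := by
  rw [Units.val_mul, Units.val_mul, Units.val_pow_eq_pow_val, coe_Xmat_mul_Ymat, coe_Xmat,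
    pow_three]
  simp only [mul_fin_two]
  congr 1
  ext i j
  fin_cases i <;> fin_cases j <;> (dsimp; ring)

end RationalFunctions

theorem PGL2_contains_free_general (p : ℕ) [Fact p.Prime] :
    (∃ f : FreeGroup Bool →* PGL2 (RatFunc (ZMod p)),
        Function.Injective f ∧
        ∀ g, f g ∈ Subgroup.closure
          ({QuotientGroup.mk (Xmat p), QuotientGroup.mk (Ymat p)} :
            Set (PGL2 (RatFunc (ZMod p))))) ∧
    Infinite (Subgroup.closure
      ({QuotientGroup.mk (Xmat p), QuotientGroup.mk (Ymat p)} :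
        Set (PGL2 (RatFunc (ZMod p))))) := by
  set H := Subgroup.closure
    ({QuotientGroup.mk (Xmat p), QuotientGroup.mk (Ymat p)} : Set (PGL2 (RatFunc (ZMod p))))
  set A := Xmat p * Ymat p
  set B := Xmat p * A ^ 3 * Xmat p
  set f := FreeGroup.lift fun i => cond i (QuotientGroup.mk A : PGL2 (RatFunc (ZMod p)))
    (QuotientGroup.mk B)
  have hf : Function.Injective f :=
    PGL2.injective_freeGroupLift_of_valuation ((Polynomial.idealX (ZMod p)).valuation _)
      RatFunc.X_ne_zero (RatFunc.valuation_X_lt_one _) (coe_Xmat_mul_Ymat p)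
      (coe_Xmat_mul_pow_mul_Xmat p)
  have hX : (QuotientGroup.mk (Xmat p) : PGL2 (RatFunc (ZMod p))) ∈ H :=
    Subgroup.subset_closure (Set.mem_insert _ _)
  have hY : (QuotientGroup.mk (Ymat p) : PGL2 (RatFunc (ZMod p))) ∈ H :=
    Subgroup.subset_closure (Set.mem_insert_of_mem _ rfl)
  have hA : (QuotientGroup.mk A : PGL2 (RatFunc (ZMod p))) ∈ H := mul_mem hX hY
  have hB : (QuotientGroup.mk B : PGL2 (RatFunc (ZMod p))) ∈ H :=
    mul_mem (mul_mem hX (pow_mem hA 3)) hX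
  have hfH : ∀ g, f g ∈ H := fun g =>
    FreeGroup.range_lift_le (Set.range_subset_iff.2 (Bool.forall_bool.2 ⟨hB, hA⟩)) ⟨g, rfl⟩
  exact ⟨⟨f, hf, hfH⟩, Infinite.of_injective (fun g => ⟨f g, hfH g⟩)
    fun _ _ h => hf (congrArg Subtype.val h)⟩

/-- The subgroup of `PGL₂(𝔽_p(t))` (for `p ≥ 3`) generated by the images of
`(0,1;−1,−1)` and `(0,1;t,0)` contains a nonabelian free subgroup;
in particular it is infinite. -/
theorem PGL2_contains_free (p : ℕ) [Fact p.Prime] (hp : 3 ≤ p) :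
    (∃ f : FreeGroup Bool →* PGL2 (RatFunc (ZMod p)),
        Function.Injective f ∧
        ∀ g, f g ∈ Subgroup.closure
          ({QuotientGroup.mk (Xmat p), QuotientGroup.mk (Ymat p)} :
            Set (PGL2 (RatFunc (ZMod p))))) ∧
    Infinite (Subgroup.closure
      ({QuotientGroup.mk (Xmat p), QuotientGroup.mk (Ymat p)} :
        Set (PGL2 (RatFunc (ZMod p))))) :=
  PGL2_contains_free_general p
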